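/- arXiv:0904.1336 — 2 statements merged into one kernel-verified Lean document; each statement's English description precedes it below -/
import Mathlib

section
/- Let A be a Schrödinger operator on a finite tree, λ < μ two eigenvalues with eigenvectors u, v. If G is a strong positive sign graph of u, then v cannot be strictly positive on all of G ∪ δ(G): i.e., it is impossible that v(x) > 0 for all x ∈ G and the linear extension ṽ > 0 on the nodal domain of ũ containing G. Equivalently, v must vanish or change sign on the closed nodal domain determined by G. -/
/-!
Summing `v · Au - u · Av` over the sign graph `S`, the terms of edges inside `S` cancel and what
remains is the flux of the Wronskian `c(x,y) (u x v y - u y v x)` through the boundary edges; it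
equals `(λ - μ) ∑_S u v`, which is negative if `v > 0` on `S`. So some boundary edge `(x, y)` has
`u x v y < u y v x`, and `u x > 0 ≥ u y` by maximality of `S`. The nodal domain of `ũ` runs along
this edge up to the zero `t` of `ũ`, and there `ṽ(t)` has the sign of the Wronskian, so `ṽ` is
negative at a point of the closure of the nodal domain.
-/

open scoped Classical
open Finset

/-- A finite weighted graph: positive symmetric weights on edges, zero off edges. -/
structure WeightedGraph (V : Type) [Fintype V] [DecidableEq V] where
  G : SimpleGraph V
  c : V → V → ℝ
  symm : ∀ x y, c x y = c y x
  pos : ∀ x y, G.Adj x y → 0 < c x y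
  not_adj : ∀ x y, ¬ G.Adj x y → c x y = 0

variable {V : Type} [Fintype V] [DecidableEq V]

/-- The weighted Laplacian `(L f)(x) = ∑_{y∼x} c(x,y) (f x - f y)`. -/
noncomputable def lap (W : WeightedGraph V) (f : V → ℝ) (x : V) : ℝ :=
  ∑ y, if W.G.Adj x y then W.c x y * (f x - f y) else 0

/-- The Schrödinger operator `A = L + r`. -/
noncomputable def schrod (W : WeightedGraph V) (r : V → ℝ) (f : V → ℝ) (x : V) : ℝ :=
  lap W f x + r x * f x

/-- `u` is a (nonzero) eigenvector of `A = L + r` with eigenvalue `μ`. -/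
def IsEigenpair (W : WeightedGraph V) (r : V → ℝ) (μ : ℝ) (u : V → ℝ) : Prop :=
  u ≠ 0 ∧ ∀ x, schrod W r u x = μ * u x

/-- A strong positive sign graph of `u`: a maximal connected vertex set on which `u > 0`. -/
def IsPosSignGraph (G : SimpleGraph V) (u : V → ℝ) (S : Set V) : Prop :=
  (G.induce S).Connected ∧ (∀ x ∈ S, 0 < u x) ∧
    ∀ T : Set V, S ⊆ T → (G.induce T).Connected → (∀ x ∈ T, 0 < u x) → T = S

/-- A strong negative sign graph of `u`: a maximal connected vertex set on which `u < 0`. -/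
def IsNegSignGraph (G : SimpleGraph V) (u : V → ℝ) (S : Set V) : Prop :=
  (G.induce S).Connected ∧ (∀ x ∈ S, u x < 0) ∧
    ∀ T : Set V, S ⊆ T → (G.induce T).Connected → (∀ x ∈ T, u x < 0) → T = S

/-- A strong sign graph of `u`. -/
def IsSignGraph (G : SimpleGraph V) (u : V → ℝ) (S : Set V) : Prop :=
  IsPosSignGraph G u S ∨ IsNegSignGraph G u S

/-- The number of strong sign graphs of `u`. -/
noncomputable def signGraphCount (G : SimpleGraph V) (u : V → ℝ) : ℕ :=
  Nat.card {S : Set V // IsSignGraph G u S}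

/-- The length of the edge `(x,y)`: `l(x,y) = 1/c(x,y)`. -/
noncomputable def elen (W : WeightedGraph V) (x y : V) : ℝ := 1 / W.c x y

/-- Disjoint union of the (closed) edge intervals together with the vertices. -/
abbrev EdgeSpace (W : WeightedGraph V) : Type :=
  (Σ e : {p : V × V // W.G.Adj p.1 p.2}, ↥(Set.Icc (0:ℝ) (elen W e.1.1 e.1.2))) ⊕ V

/-- Canonical description of a point of the metric tree: either a vertex, or an interior
edge point recorded as the unordered pair of (endpoint, distance to that endpoint). -/
noncomputable def descr (W : WeightedGraph V) : EdgeSpace W → V ⊕ Sym2 (V × ℝ)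
  | Sum.inr x => Sum.inl x
  | Sum.inl ⟨e, t⟩ =>
      if (t : ℝ) = 0 then Sum.inl e.1.1
      else if (t : ℝ) = elen W e.1.1 e.1.2 then Sum.inl e.1.2
      else Sum.inr (Sym2.mk (e.1.1, (t : ℝ)) (e.1.2, elen W e.1.1 e.1.2 - (t : ℝ)))

/-- The metric tree: the set of canonical descriptions of points, i.e. the geometric
realization of the weighted graph with edge `(x,y)` identified with `[0, l(x,y)]`. -/
abbrev MT (W : WeightedGraph V) : Type := ↥(Set.range (descr W))

/-- Quotient (gluing) topology on the metric tree. -/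
noncomputable instance (W : WeightedGraph V) : TopologicalSpace (MT W) :=
  letI : TopologicalSpace V := ⊥
  TopologicalSpace.coinduced (fun p => (⟨descr W p, ⟨p, rfl⟩⟩ : MT W)) inferInstance

/-- Value of the piecewise-linear extension of `u` at a described point. -/
noncomputable def lineVal (u : V → ℝ) : V ⊕ Sym2 (V × ℝ) → ℝ
  | Sum.inl x => u x
  | Sum.inr s => Sym2.lift ⟨fun a b => (b.2 * u a.1 + a.2 * u b.1) / (a.2 + b.2),
      fun a b => by dsimp only; ring_nf⟩ s

/-- The piecewise-linear extension `ũ` of `u : V → ℝ` to the metric tree. -/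
noncomputable def uext (W : WeightedGraph V) (u : V → ℝ) (p : MT W) : ℝ := lineVal u p.1

/-- The embedding of a vertex into the metric tree. -/
def vtx (W : WeightedGraph V) (x : V) : MT W := ⟨Sum.inl x, ⟨Sum.inr x, rfl⟩⟩

/-- A nodal domain of `ũ`: a maximal connected subset of the metric tree on which
`ũ` has constant strict sign. -/
def IsNodalDomain (W : WeightedGraph V) (u : V → ℝ) (D : Set (MT W)) : Prop :=
  D.Nonempty ∧ IsPreconnected D ∧
    ((∀ p ∈ D, 0 < uext W u p) ∨ (∀ p ∈ D, uext W u p < 0)) ∧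
    ∀ D' : Set (MT W), D ⊆ D' → IsPreconnected D' →
      ((∀ p ∈ D', 0 < uext W u p) ∨ (∀ p ∈ D', uext W u p < 0)) → D' = D

/-- Number of nodal domains of `ũ`. -/
noncomputable def nodalCount (W : WeightedGraph V) (u : V → ℝ) : ℕ :=
  Nat.card {D : Set (MT W) // IsNodalDomain W u D}

/-- A zero of `ũ`, counted as a maximal connected subset of the metric tree on which
`ũ` vanishes (so a maximal zero subgraph counts as a single zero). -/
def IsZeroComponent (W : WeightedGraph V) (u : V → ℝ) (Z : Set (MT W)) : Prop :=
  Z.Nonempty ∧ IsPreconnected Z ∧ (∀ p ∈ Z, uext W u p = 0) ∧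
    ∀ Z' : Set (MT W), Z ⊆ Z' → IsPreconnected Z' → (∀ p ∈ Z', uext W u p = 0) → Z' = Z

/-- Number of zeros of `ũ` (each maximal zero subgraph counting as one zero). -/
noncomputable def zeroCount (W : WeightedGraph V) (u : V → ℝ) : ℕ :=
  Nat.card {Z : Set (MT W) // IsZeroComponent W u Z}

open Set

section Green

variable (W : WeightedGraph V)

lemma lap_eq_sum (f : V → ℝ) (x : V) : lap W f x = ∑ y, W.c x y * (f x - f y) := by
  refine Finset.sum_congr rfl fun y _ => ?_
  split_ifs with h
  · rfl
  · simp [W.not_adj x y h]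

lemma sum_mul_lap_sub_mul_lap (u v : V → ℝ) (F : Finset V) :
    ∑ a ∈ F, (v a * lap W u a - u a * lap W v a) =
      ∑ a ∈ F, ∑ b ∈ Fᶜ, W.c a b * (u a * v b - u b * v a) := by
  set g : V → V → ℝ := fun a b => W.c a b * (u a * v b - u b * v a)
  have hrow : ∀ a, v a * lap W u a - u a * lap W v a = ∑ b, g a b := fun a => by
    simp only [lap_eq_sum, Finset.mul_sum, ← Finset.sum_sub_distrib, g]
    exact Finset.sum_congr rfl fun b _ => by ring
  -- the edges inside `F` cancel because `g` is antisymmetric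
  have hinner : ∑ a ∈ F, ∑ b ∈ F, g a b = 0 := by
    have hanti : ∑ a ∈ F, ∑ b ∈ F, g a b = -∑ a ∈ F, ∑ b ∈ F, g a b := by
      nth_rewrite 1 [Finset.sum_comm]
      simp only [← Finset.sum_neg_distrib]
      exact Finset.sum_congr rfl fun b _ => Finset.sum_congr rfl fun a _ => by
        simp only [g, W.symm a b]; ring
    linarith
  simp only [hrow, ← Finset.sum_add_sum_compl F, Finset.sum_add_distrib, hinner, zero_add, g]

lemma sum_boundary_wronskian (r : V → ℝ) {lam mu : ℝ} {u v : V → ℝ}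
    (hu : ∀ x, schrod W r u x = lam * u x) (hv : ∀ x, schrod W r v x = mu * v x)
    (F : Finset V) :
    ∑ a ∈ F, ∑ b ∈ Fᶜ, W.c a b * (u a * v b - u b * v a) =
      (lam - mu) * ∑ a ∈ F, u a * v a := by
  rw [← sum_mul_lap_sub_mul_lap, Finset.mul_sum]
  refine Finset.sum_congr rfl fun a _ => ?_
  have hua := hu a
  have hva := hv a
  simp only [schrod] at hua hva
  linear_combination v a * hua - u a * hva

lemma exists_adj_wronskian_neg (r : V → ℝ) {lam mu : ℝ} {u v : V → ℝ}
    (hu : ∀ x, schrod W r u x = lam * u x) (hv : ∀ x, schrod W r v x = mu * v x)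
    (hlt : lam < mu) {F : Finset V} (huv : 0 < ∑ a ∈ F, u a * v a) :
    ∃ x ∈ F, ∃ y ∉ F, W.G.Adj x y ∧ u x * v y - u y * v x < 0 := by
  have hflux : ∑ a ∈ F, ∑ b ∈ Fᶜ, W.c a b * (u a * v b - u b * v a) < ∑ a ∈ F, (0 : ℝ) := by
    rw [sum_boundary_wronskian W r hu hv, Finset.sum_const_zero]
    exact mul_neg_of_neg_of_pos (by linarith) huv
  obtain ⟨x, hxF, hx⟩ := Finset.exists_lt_of_sum_lt hflux
  obtain ⟨y, hyF, hy⟩ := Finset.exists_lt_of_sum_lt (hx.trans_eq Finset.sum_const_zero.symm)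
  have hadj : W.G.Adj x y := by
    by_contra h
    simp [W.not_adj x y h] at hy
  exact ⟨x, hxF, y, Finset.mem_compl.mp hyF, hadj, neg_of_mul_neg_right hy (W.pos x y hadj).le⟩

end Green

omit [Fintype V] [DecidableEq V] in
lemma IsPosSignGraph.nonpos_of_adj {G : SimpleGraph V} {u : V → ℝ} {S : Set V}
    (hS : IsPosSignGraph G u S) {x y : V} (hx : x ∈ S) (hy : y ∉ S) (hadj : G.Adj x y) :
    u y ≤ 0 := by
  by_contra! huy
  have hconn : (G.induce (insert y S)).Connected := by
    rw [← union_singleton]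
    exact SimpleGraph.connected_induce_union hS.1.preconnected
      SimpleGraph.Preconnected.of_subsingleton hx rfl hadj
  have hpos : ∀ z ∈ insert y S, 0 < u z := by
    rintro z (rfl | hz)
    exacts [huy, hS.2.1 z hz]
  exact hy (hS.2.2 _ (subset_insert y S) hconn hpos ▸ mem_insert y S)

lemma exists_zero_affine_of_pos_of_nonpos {a b l : ℝ} (ha : 0 < a) (hb : b ≤ 0) (hl : 0 < l) :
    ∃ t, 0 < t ∧ t ≤ l ∧ (l - t) * a + t * b = 0 ∧ ∀ s < t, 0 < (l - s) * a + s * b := by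
  have hab : 0 < a - b := by linarith
  refine ⟨l * a / (a - b), by positivity, ?_, ?_, fun s hs => ?_⟩
  · rw [div_le_iff₀ hab]; nlinarith
  · field_simp; ring
  · have : (l - s) * a + s * b = (l * a / (a - b) - s) * (a - b) := by field_simp; ring
    rw [this]
    exact mul_pos (by linarith) hab

section MetricTree

variable (W : WeightedGraph V)

lemma elen_pos {x y : V} (h : W.G.Adj x y) : 0 < elen W x y := one_div_pos.mpr (W.pos x y h)

/-- The point of the edge `(x, y)` at distance `s` from `x`; `s` is clamped to `[0, l(x,y)]` so
that the path is defined and continuous on all of `ℝ`. -/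
noncomputable def edgePoint {x y : V} (h : W.G.Adj x y) (s : ℝ) : MT W :=
  ⟨descr W (Sum.inl ⟨⟨(x, y), h⟩, projIcc 0 (elen W x y) (elen_pos W h).le s⟩), _, rfl⟩

variable {x y : V} (h : W.G.Adj x y)

lemma continuous_edgePoint : Continuous (edgePoint W h) := by
  let : TopologicalSpace V := ⊥
  have hedge : Continuous fun s : ℝ => (Sum.inl
      ⟨⟨(x, y), h⟩, projIcc 0 (elen W x y) (elen_pos W h).le s⟩ : EdgeSpace W) :=
    continuous_inl.comp (continuous_sigmaMk.comp continuous_projIcc :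
      Continuous fun s : ℝ => (⟨⟨(x, y), h⟩, projIcc 0 (elen W x y) (elen_pos W h).le s⟩ :
        Σ e : {p : V × V // W.G.Adj p.1 p.2}, ↥(Icc (0 : ℝ) (elen W e.1.1 e.1.2))))
  exact (continuous_coinduced_rng (f := fun p : EdgeSpace W => (⟨descr W p, p, rfl⟩ : MT W))).comp
    hedge

lemma edgePoint_zero : edgePoint W h 0 = vtx W x := by
  apply Subtype.ext
  simp [edgePoint, descr, vtx]

lemma uext_edgePoint (f : V → ℝ) {s : ℝ} (hs0 : 0 ≤ s) (hsl : s ≤ elen W x y) :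
    uext W f (edgePoint W h s) = ((elen W x y - s) * f x + s * f y) / elen W x y := by
  have hl := (elen_pos W h).ne'
  simp only [uext, edgePoint, projIcc_of_mem _ ⟨hs0, hsl⟩, descr]
  split_ifs with h0 hl'
  · simp [lineVal, h0, hl]
  · simp [lineVal, hl', hl]
  · simp only [lineVal, Sym2.lift_mk]
    ring_nf

end MetricTree

section NodalDomain

variable {W : WeightedGraph V} {u : V → ℝ} {D : Set (MT W)}

lemma IsNodalDomain.subset_of_pos (hD : IsNodalDomain W u D) {p : MT W} (hpD : p ∈ D)
    (hp : 0 < uext W u p) {C : Set (MT W)} (hC : IsPreconnected C) (hpC : p ∈ C)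
    (hCpos : ∀ q ∈ C, 0 < uext W u q) : C ⊆ D := by
  have hDpos : ∀ q ∈ D, 0 < uext W u q :=
    hD.2.2.1.resolve_right fun hneg => (hneg p hpD).not_gt hp
  have hunion : D ∪ C = D := hD.2.2.2 _ subset_union_left (hD.2.1.union p hpD hpC hC)
    (Or.inl fun q hq => hq.elim (hDpos q) (hCpos q))
  exact hunion ▸ subset_union_right

lemma IsNodalDomain.edgePoint_mem_closure (hD : IsNodalDomain W u D) {x y : V}
    (h : W.G.Adj x y) (hxD : vtx W x ∈ D) {t : ℝ} (ht0 : 0 < t) (htl : t ≤ elen W x y)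
    (hpos : ∀ s < t, 0 < (elen W x y - s) * u x + s * u y) :
    edgePoint W h t ∈ closure D := by
  have hupos : ∀ s ∈ Ico 0 t, 0 < uext W u (edgePoint W h s) := fun s hs => by
    rw [uext_edgePoint W h u hs.1 (hs.2.le.trans htl)]
    exact div_pos (hpos s hs.2) (elen_pos W h)
  have hseg : edgePoint W h '' Ico 0 t ⊆ D := by
    have h0 : (0 : ℝ) ∈ Ico 0 t := ⟨le_rfl, ht0⟩
    refine hD.subset_of_pos hxD (edgePoint_zero W h ▸ hupos 0 h0)
      (isPreconnected_Ico.image _ (continuous_edgePoint W h).continuousOn)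
      ⟨0, h0, edgePoint_zero W h⟩ ?_
    rintro _ ⟨s, hs, rfl⟩
    exact hupos s hs
  have ht : t ∈ closure (Ico 0 t) := by
    rw [closure_Ico ht0.ne]
    exact ⟨ht0.le, le_rfl⟩
  exact closure_mono hseg (mem_closure_image (continuous_edgePoint W h).continuousAt ht)

end NodalDomain

theorem v_not_positive_on_nodal_domain_general (W : WeightedGraph V)
    (r : V → ℝ) (lam mu : ℝ) (u v : V → ℝ)
    (hu : IsEigenpair W r lam u) (hv : IsEigenpair W r mu v) (hlt : lam < mu)
    (S : Set V) (hS : IsPosSignGraph W.G u S)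
    (D : Set (MT W)) (hD : IsNodalDomain W u D) (hSD : ∀ x ∈ S, vtx W x ∈ D) :
    ¬ ∀ p ∈ closure D, 0 < uext W v p := by
  intro hvD
  have hvS : ∀ z ∈ S, 0 < v z := fun z hz => hvD _ (subset_closure (hSD z hz))
  have huv : 0 < ∑ z ∈ S.toFinset, u z * v z := by
    obtain ⟨⟨z, hz⟩⟩ := hS.1.nonempty
    refine Finset.sum_pos (fun a ha => ?_) ⟨z, mem_toFinset.2 hz⟩
    rw [mem_toFinset] at ha
    exact mul_pos (hS.2.1 a ha) (hvS a ha)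
  obtain ⟨x, hxS, y, hyS, hxy, hwr⟩ := exists_adj_wronskian_neg W r hu.2 hv.2 hlt huv
  rw [mem_toFinset] at hxS hyS
  have hux := hS.2.1 x hxS
  obtain ⟨t, ht0, htl, hzero, hbefore⟩ := exists_zero_affine_of_pos_of_nonpos hux
    (hS.nonpos_of_adj hxS hyS hxy) (elen_pos W hxy)
  have hvt := hvD _ (hD.edgePoint_mem_closure hxy (hSD x hxS) ht0 htl hbefore)
  rw [uext_edgePoint W hxy v ht0.le htl, div_pos_iff_of_pos_right (elen_pos W hxy)] at hvt
  -- at the zero of `ũ` the numerator of `ṽ` is a positive multiple of the Wronskian on `(x, y)`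
  have hwr_eq : ((elen W x y - t) * v x + t * v y) * u x = t * (u x * v y - u y * v x) := by
    linear_combination v x * hzero
  exact (mul_pos hvt hux).not_gt (hwr_eq ▸ mul_neg_of_pos_of_neg ht0 hwr)

/-- if `Au = λu`, `Av = μv` with `λ < μ`, and `S` is a strong positive
sign graph of `u`, then `ṽ` cannot be strictly positive on the whole closed nodal
domain of `ũ` determined by `S`. -/
theorem v_not_positive_on_nodal_domain (W : WeightedGraph V) (hT : W.G.IsTree)
    (r : V → ℝ) (lam mu : ℝ) (u v : V → ℝ)
    (hu : IsEigenpair W r lam u) (hv : IsEigenpair W r mu v) (hlt : lam < mu)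
    (S : Set V) (hS : IsPosSignGraph W.G u S)
    (D : Set (MT W)) (hD : IsNodalDomain W u D) (hSD : ∀ x ∈ S, vtx W x ∈ D) :
    ¬ ∀ p ∈ closure D, 0 < uext W v p :=
  v_not_positive_on_nodal_domain_general W r lam mu u v hu hv hlt S hS D hD hSD
end

section
/- (Upper bound on sign graphs, Davies–Gladwell–Leydold–Stadler) Let A be a generalized Laplacian (symmetric matrix with nonpositive off-diagonal entries) on a finite connected graph, with ordered eigenvalues λ₁ ≤ ⋯ ≤ λ_N. If λ_n has multiplicity r, then any eigenvector for λ_n has at most n + r − 1 strong sign graphs. -/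
/-!
Let `λ = e n`. The restrictions of `w` to its sign graphs have disjoint supports, so they are
linearly independent and span a space `W = signGraphSpan G w` of dimension `signGraphCount G w`.
Every `x ∈ W` has the form `g * w` with `g` constant on each sign graph, and since `A w = λ w`,
`2 (λ ‖g w‖² - ⟪g w, A (g w)⟫) = ∑ x y, A x y * w x * w y * (g x - g y) ^ 2`.
A term with `A x y * w x * w y < 0` joins adjacent vertices of equal sign, which lie in one sign
graph, so its factor `(g x - g y) ^ 2` vanishes: the Rayleigh quotient is at most `λ` on `W`.
On the span `U` of the eigenvectors with eigenvalue `> λ` it is `> λ`, hence `W ⊓ U = ⊥` and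
`signGraphCount G w ≤ N - dim U = #{i | e i ≤ λ} ≤ n + r`.
-/

open scoped Classical
open Finset

variable {V : Type} [Fintype V] [DecidableEq V]

open Function Matrix Submodule

section SignGraph

variable {α : Type} {G : SimpleGraph α} {u : α → ℝ} {S T : Set α}

theorem isNegSignGraph_iff_isPosSignGraph_neg :
    IsNegSignGraph G u S ↔ IsPosSignGraph G (-u) S := by
  simp [IsNegSignGraph, IsPosSignGraph]

theorem IsPosSignGraph.eq_of_mem (hS : IsPosSignGraph G u S) (hT : IsPosSignGraph G u T)
    {x : α} (hxS : x ∈ S) (hxT : x ∈ T) : S = T := by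
  have hconn := SimpleGraph.induce_union_connected hS.1.preconnected hT.1.preconnected
    ⟨x, hxS, hxT⟩
  have hpos : ∀ y ∈ S ∪ T, 0 < u y := by
    rintro y (hy | hy)
    exacts [hS.2.1 y hy, hT.2.1 y hy]
  exact (hS.2.2 _ Set.subset_union_left hconn hpos).symm.trans
    (hT.2.2 _ Set.subset_union_right hconn hpos)

theorem IsPosSignGraph.mem_of_adj (hS : IsPosSignGraph G u S) {x y : α} (hx : x ∈ S)
    (hxy : G.Adj x y) (hy : 0 < u y) : y ∈ S := by
  have hconn := SimpleGraph.induce_union_connected hS.1.preconnected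
    (SimpleGraph.induce_pair_connected_of_adj hxy).preconnected ⟨x, hx, by simp⟩
  have hpos : ∀ z ∈ S ∪ {x, y}, 0 < u z := by
    rintro z (hz | rfl | rfl)
    exacts [hS.2.1 z hz, hS.2.1 z hx, hy]
  rw [← hS.2.2 _ Set.subset_union_left hconn hpos]
  simp

theorem exists_isPosSignGraph_mem [Finite α] {x : α} (hx : 0 < u x) :
    ∃ S, IsPosSignGraph G u S ∧ x ∈ S := by
  obtain ⟨S, hxS, hmax⟩ := (Set.toFinite {T : Set α | (G.induce T).Connected ∧ ∀ y ∈ T, 0 < u y}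
    ).exists_le_maximal (a := {x}) ⟨by simp, by simpa⟩
  exact ⟨S, ⟨hmax.prop.1, hmax.prop.2, fun T hST hT hTpos => (hmax.eq_of_le ⟨hT, hTpos⟩ hST).symm⟩,
    hxS rfl⟩

theorem IsSignGraph.exists_ne_zero (hS : IsSignGraph G u S) : ∃ x ∈ S, u x ≠ 0 := by
  rcases hS with hS | hS
  · obtain ⟨x, hx⟩ := Set.nonempty_coe_sort.1 hS.1.nonempty
    exact ⟨x, hx, (hS.2.1 x hx).ne'⟩
  · obtain ⟨x, hx⟩ := Set.nonempty_coe_sort.1 hS.1.nonempty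
    exact ⟨x, hx, (hS.2.1 x hx).ne⟩

theorem IsSignGraph.eq_of_mem (hS : IsSignGraph G u S) (hT : IsSignGraph G u T) {x : α}
    (hxS : x ∈ S) (hxT : x ∈ T) : S = T := by
  simp only [IsSignGraph, isNegSignGraph_iff_isPosSignGraph_neg] at hS hT
  rcases hS with hS | hS <;> rcases hT with hT | hT
  · exact hS.eq_of_mem hT hxS hxT
  · exact absurd (hT.2.1 x hxT) (by simpa using (hS.2.1 x hxS).le)
  · exact absurd (hS.2.1 x hxS) (by simpa using (hT.2.1 x hxT).le)
  · exact hS.eq_of_mem hT hxS hxT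

theorem pairwise_disjoint_isSignGraph :
    Pairwise (Disjoint on fun S : {S // IsSignGraph G u S} => S.1) :=
  fun S T hST => Set.disjoint_left.2 fun _ hxS hxT => hST (Subtype.ext (S.2.eq_of_mem T.2 hxS hxT))

theorem IsSignGraph.mem_of_adj (hS : IsSignGraph G u S) {x y : α} (hx : x ∈ S)
    (hxy : G.Adj x y) (hxy_pos : 0 < u x * u y) : y ∈ S := by
  rcases hS with hS | hS
  · exact hS.mem_of_adj hx hxy (pos_of_mul_pos_right hxy_pos (hS.2.1 x hx).le)
  · have hy := neg_of_mul_pos_right hxy_pos (hS.2.1 x hx).le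
    rw [isNegSignGraph_iff_isPosSignGraph_neg] at hS
    exact hS.mem_of_adj hx hxy (neg_pos.2 hy)

theorem exists_isSignGraph_mem [Finite α] {x : α} (hx : u x ≠ 0) :
    ∃ S, IsSignGraph G u S ∧ x ∈ S := by
  rcases hx.lt_or_gt with hx | hx
  · obtain ⟨S, hS, hxS⟩ := exists_isPosSignGraph_mem (G := G) (u := -u) (neg_pos.2 hx)
    exact ⟨S, Or.inr (isNegSignGraph_iff_isPosSignGraph_neg.2 hS), hxS⟩
  · obtain ⟨S, hS, hxS⟩ := exists_isPosSignGraph_mem (G := G) hx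
    exact ⟨S, Or.inl hS, hxS⟩

end SignGraph

section SymmetricMatrix

variable {ι : Type*} [Fintype ι] {A : Matrix ι ι ℝ}

theorem sum_dotProduct_sum_of_pairwise {R κ : Type*} [NonUnitalNonAssocSemiring R]
    (s : Finset κ) (v w : κ → ι → R) (h : ∀ i ∈ s, ∀ j ∈ s, i ≠ j → v i ⬝ᵥ w j = 0) :
    (∑ i ∈ s, v i) ⬝ᵥ (∑ j ∈ s, w j) = ∑ i ∈ s, v i ⬝ᵥ w i := by
  simp_rw [sum_dotProduct, dotProduct_sum]
  exact Finset.sum_congr rfl fun i hi =>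
    Finset.sum_eq_single_of_mem i hi fun j hj hji => h i hi j hj hji.symm

theorem dotProduct_eq_zero_of_mulVec_eq_smul (hA : A.IsSymm) {v w : ι → ℝ} {μ ν : ℝ}
    (hv : A *ᵥ v = μ • v) (hw : A *ᵥ w = ν • w) (hμν : μ ≠ ν) : v ⬝ᵥ w = 0 := by
  have h : μ * (v ⬝ᵥ w) = ν * (v ⬝ᵥ w) := by
    rw [← smul_eq_mul, ← smul_dotProduct, ← hv, ← smul_eq_mul, ← dotProduct_smul, ← hw,
      dotProduct_mulVec, ← mulVec_transpose, hA.eq]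
  exact (mul_eq_mul_right_iff.1 h).resolve_left hμν

theorem exists_eigen_sum_of_mem_span {κ : Type*} [Fintype κ] {u : κ → ι → ℝ} {e : κ → ℝ}
    (hu : ∀ i, A *ᵥ u i = e i • u i) {x : ι → ℝ} (hx : x ∈ span ℝ (Set.range u)) :
    ∃ P : ℝ → ι → ℝ, (∀ μ, A *ᵥ P μ = μ • P μ) ∧ x = ∑ μ ∈ univ.image e, P μ := by
  obtain ⟨c, rfl⟩ := (mem_span_range_iff_exists_fun ℝ).1 hx
  refine ⟨fun μ => ∑ i with e i = μ, c i • u i, fun μ => ?_,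
    (sum_fiberwise_of_maps_to (fun i _ => mem_image_of_mem e (mem_univ i)) _).symm⟩
  simp_rw [mulVec_sum, mulVec_smul, hu, smul_sum]
  refine Finset.sum_congr rfl fun i hi => ?_
  rw [(mem_filter.1 hi).2, smul_comm]

theorem lt_dotProduct_mulVec_of_mem_span {κ : Type*} [Fintype κ] (hA : A.IsSymm)
    {u : κ → ι → ℝ} {e : κ → ℝ} (hu : ∀ i, A *ᵥ u i = e i • u i) {μ : ℝ} (he : ∀ i, μ < e i)
    {x : ι → ℝ} (hx : x ∈ span ℝ (Set.range u)) (hx0 : x ≠ 0) :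
    μ * (x ⬝ᵥ x) < x ⬝ᵥ A *ᵥ x := by
  obtain ⟨P, hP, rfl⟩ := exists_eigen_sum_of_mem_span hu hx
  set t := univ.image e
  have hshift : A *ᵥ (∑ ν ∈ t, P ν) - μ • ∑ ν ∈ t, P ν = ∑ ν ∈ t, (ν - μ) • P ν := by
    simp only [mulVec_sum, hP, smul_sum, sub_smul, sum_sub_distrib]
  have horth : ∀ ν ∈ t, ∀ ν' ∈ t, ν ≠ ν' → P ν ⬝ᵥ (ν' - μ) • P ν' = 0 := fun ν _ ν' _ h => by
    rw [dotProduct_smul, dotProduct_eq_zero_of_mulVec_eq_smul hA (hP ν) (hP ν') h, smul_zero]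
  have hquad : (∑ ν ∈ t, P ν) ⬝ᵥ A *ᵥ (∑ ν ∈ t, P ν) - μ * ((∑ ν ∈ t, P ν) ⬝ᵥ ∑ ν ∈ t, P ν)
      = ∑ ν ∈ t, (ν - μ) * (P ν ⬝ᵥ P ν) := by
    rw [← smul_eq_mul, ← dotProduct_smul, ← dotProduct_sub, hshift,
      sum_dotProduct_sum_of_pairwise t _ _ horth]
    simp only [dotProduct_smul, smul_eq_mul]
  obtain ⟨ν, hν, hPν⟩ : ∃ ν ∈ t, P ν ≠ 0 := by
    by_contra! h
    exact hx0 (sum_eq_zero h)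
  have hgt : ∀ ν ∈ t, 0 < ν - μ := fun ν hν => by
    obtain ⟨i, -, rfl⟩ := mem_image.1 hν
    exact sub_pos.2 (he i)
  have hpos : 0 < ∑ ν ∈ t, (ν - μ) * (P ν ⬝ᵥ P ν) :=
    sum_pos' (fun ν' hν' => mul_nonneg (hgt ν' hν').le
        (by simpa using dotProduct_self_star_nonneg (P ν')))
      ⟨ν, hν, mul_pos (hgt ν hν) (by simpa using dotProduct_self_star_pos_iff.2 hPν)⟩
  linarith

theorem dotProduct_mulVec_le_of_mulVec_eq_smul (hA : A.IsSymm) {w : ι → ℝ} {μ : ℝ}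
    (hw : A *ᵥ w = μ • w) {g : ι → ℝ} (hg : ∀ x y, A x y * (w x * w y) < 0 → g x = g y) :
    (g * w) ⬝ᵥ A *ᵥ (g * w) ≤ μ * ((g * w) ⬝ᵥ (g * w)) := by
  set a : ι → ι → ℝ := fun x y => A x y * (w x * w y) with ha
  have hterm : ∀ x y, 0 ≤ a x y * (g x - g y) ^ 2 := fun x y => by
    by_cases h : a x y < 0
    · simp [hg x y h]
    · exact mul_nonneg (not_lt.1 h) (sq_nonneg _)
  have hdiag : ∑ x, ∑ y, a x y * g x ^ 2 = μ * ((g * w) ⬝ᵥ (g * w)) := by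
    simp only [dotProduct, Pi.mul_apply, mul_sum]
    refine Finset.sum_congr rfl fun x _ => ?_
    calc ∑ y, a x y * g x ^ 2 = (A *ᵥ w) x * (w x * g x ^ 2) := by
          rw [mulVec, dotProduct, sum_mul]; exact Finset.sum_congr rfl fun y _ => by ring
      _ = μ * (g x * w x * (g x * w x)) := by rw [hw, Pi.smul_apply, smul_eq_mul]; ring
  have hswap : ∑ x, ∑ y, a x y * g y ^ 2 = ∑ x, ∑ y, a x y * g x ^ 2 := by
    rw [sum_comm]
    exact Finset.sum_congr rfl fun x _ => Finset.sum_congr rfl fun y _ => by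
      simp only [ha, hA.apply x y]; ring
  have hcross : ∑ x, ∑ y, a x y * (g x * g y) = (g * w) ⬝ᵥ A *ᵥ (g * w) := by
    simp only [dotProduct, mulVec, Pi.mul_apply, mul_sum]
    exact Finset.sum_congr rfl fun x _ => Finset.sum_congr rfl fun y _ => by ring
  have hexpand : ∑ x, ∑ y, a x y * (g x - g y) ^ 2 = ∑ x, ∑ y, a x y * g x ^ 2
      + ∑ x, ∑ y, a x y * g y ^ 2 - 2 * ∑ x, ∑ y, a x y * (g x * g y) := by
    simp only [mul_sum, ← sum_add_distrib, ← sum_sub_distrib]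
    exact Finset.sum_congr rfl fun x _ => Finset.sum_congr rfl fun y _ => by ring
  linarith [sum_nonneg fun x (_ : x ∈ univ) => sum_nonneg fun y (_ : y ∈ univ) => hterm x y]

end SymmetricMatrix

section Indicator

variable {ι κ R : Type*} {s : κ → Set ι}

theorem sum_smul_indicator_apply_of_mem [Semiring R] (hs : Pairwise (Disjoint on s)) (w : ι → R)
    (t : Finset κ) (c : κ → R) {i : κ} (hi : i ∈ t) {x : ι} (hx : x ∈ s i) :
    (∑ j ∈ t, c j • (s j).indicator w) x = c i * w x := by
  rw [Finset.sum_apply, Finset.sum_eq_single_of_mem i hi fun j _ hji => ?_]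
  · simp [Set.indicator_of_mem hx]
  · simp [Set.indicator_of_notMem ((hs hji).symm.notMem_of_mem_left hx)]

theorem linearIndependent_indicator [Ring R] [NoZeroDivisors R] (hs : Pairwise (Disjoint on s))
    {w : ι → R} (hw : ∀ i, ∃ x ∈ s i, w x ≠ 0) :
    LinearIndependent R fun i => (s i).indicator w := by
  refine linearIndependent_iff'.2 fun t c hc i hi => ?_
  obtain ⟨x, hx, hwx⟩ := hw i
  have hcx := congrFun hc x
  rw [sum_smul_indicator_apply_of_mem hs w t c hi hx] at hcx
  exact (mul_eq_zero.1 hcx).resolve_right hwx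

theorem exists_eq_mul_of_mem_span_indicator [Semiring R] [Finite κ]
    (hs : Pairwise (Disjoint on s)) {w x : ι → R}
    (hx : x ∈ span R (Set.range fun i => (s i).indicator w)) :
    ∃ g : ι → R, x = g * w ∧ ∀ i, ∀ a ∈ s i, ∀ b ∈ s i, g a = g b := by
  have := Fintype.ofFinite κ
  obtain ⟨c, rfl⟩ := (mem_span_range_iff_exists_fun R).1 hx
  refine ⟨∑ i, c i • (s i).indicator 1, funext fun a => ?_, fun i a ha b hb => ?_⟩
  · simp [Finset.sum_apply, Finset.sum_mul, Set.indicator_apply]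
  · have hc : ∀ a ∈ s i, (∑ j, c j • (s j).indicator 1) a = c i := fun a ha => by
      simpa using sum_smul_indicator_apply_of_mem hs 1 univ c (mem_univ i) ha
    rw [hc a ha, hc b hb]

end Indicator

section SignGraphSpan

variable {α : Type} [Fintype α] (G : SimpleGraph α) (w : α → ℝ)

def signGraphSpan : Submodule ℝ (α → ℝ) :=
  span ℝ (Set.range fun S : {S // IsSignGraph G w S} => S.1.indicator w)

theorem finrank_signGraphSpan : Module.finrank ℝ (signGraphSpan G w) = signGraphCount G w := by
  rw [signGraphSpan, finrank_span_eq_card (linearIndependent_indicator pairwise_disjoint_isSignGraph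
    fun S => S.2.exists_ne_zero), signGraphCount, Nat.card_eq_fintype_card]

variable {G w}

theorem dotProduct_mulVec_le_of_mem_signGraphSpan {A : Matrix α α ℝ} (hA : A.IsSymm)
    (hnonpos : ∀ x y, x ≠ y → A x y ≤ 0) (hadj : ∀ x y, x ≠ y → A x y < 0 → G.Adj x y)
    {μ : ℝ} (hw : A *ᵥ w = μ • w) {v : α → ℝ} (hv : v ∈ signGraphSpan G w) :
    v ⬝ᵥ A *ᵥ v ≤ μ * (v ⬝ᵥ v) := by
  obtain ⟨g, rfl, hg⟩ := exists_eq_mul_of_mem_span_indicator pairwise_disjoint_isSignGraph hv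
  refine dotProduct_mulVec_le_of_mulVec_eq_smul hA hw fun x y hneg => ?_
  obtain rfl | hxy := eq_or_ne x y
  · rfl
  have hAxy : A x y < 0 := (hnonpos x y hxy).lt_of_ne fun h => by simp [h] at hneg
  have hsame : 0 < w x * w y := pos_of_mul_neg_right hneg (hnonpos x y hxy)
  obtain ⟨S, hS, hxS⟩ := exists_isSignGraph_mem (G := G) (left_ne_zero_of_mul hsame.ne')
  exact hg ⟨S, hS⟩ x hxS y (hS.mem_of_adj hxS (hadj x y hxy hAxy) hsame)

end SignGraphSpan

theorem Monotone.card_le_add_card_eq_add_card_lt {β : Type*} [LinearOrder β] {N : ℕ}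
    {e : Fin N → β} (he : Monotone e) (n : Fin N) :
    N ≤ n + #{i | e i = e n} + #{i | e n < e i} := by
  have hcover : univ ⊆ Iio n ∪ univ.filter (e · = e n) ∪ univ.filter (e n < e ·) := fun i _ => by
    rcases lt_trichotomy (e i) (e n) with h | h | h
    · exact mem_union_left _ (mem_union_left _ (mem_Iio.2 (he.reflect_lt h)))
    · exact mem_union_left _ (mem_union_right _ (by simpa using h))
    · exact mem_union_right _ (by simpa using h)
  calc N = #(univ : Finset (Fin N)) := (card_fin N).symm
    _ ≤ #(Iio n ∪ univ.filter (e · = e n) ∪ univ.filter (e n < e ·)) := card_le_card hcover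
    _ ≤ #(Iio n) + #{i | e i = e n} + #{i | e n < e i} :=
      (card_union_le _ _).trans (Nat.add_le_add_right (card_union_le _ _) _)
    _ = n + #{i | e i = e n} + #{i | e n < e i} := by rw [Fin.card_Iio]

/-- `n` is 0-indexed: the paper's bound `n + r - 1` for the `n`-th eigenvalue reads `n + rmul`. -/
theorem davies_sign_graph_bound_general (A : Matrix V V ℝ) (hsymm : A.IsSymm)
    (G : SimpleGraph V)
    (hoff : ∀ x y, x ≠ y → (A x y ≤ 0 ∧ (A x y < 0 ↔ G.Adj x y)))
    (N : ℕ) (hN : Fintype.card V = N)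
    (e : Fin N → ℝ) (hmono : Monotone e)
    (u : Fin N → (V → ℝ))
    (hu : ∀ i, u i ≠ 0 ∧ A.mulVec (u i) = e i • u i)
    (hind : LinearIndependent ℝ u)
    (n : Fin N) (rmul : ℕ) (hr : rmul = Nat.card {i : Fin N // e i = e n})
    (w : V → ℝ) (hAw : A.mulVec w = e n • w) :
    signGraphCount G w ≤ n.val + rmul := by
  let U := span ℝ (Set.range fun i : {i // e n < e i} => u i)
  have hWU : Disjoint (signGraphSpan G w) U := disjoint_def.2 fun v hvW hvU => by
    by_contra hv
    exact (lt_dotProduct_mulVec_of_mem_span hsymm (e := fun i : {i // e n < e i} => e i)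
      (fun i => (hu i).2) (fun i => i.2) hvU hv).not_ge
      (dotProduct_mulVec_le_of_mem_signGraphSpan hsymm (fun x y h => (hoff x y h).1)
        (fun x y h => (hoff x y h).2.1) hAw hvW)
  have hU : Module.finrank ℝ U = #{i | e n < e i} := by
    rw [finrank_span_eq_card (b := fun i : {i // e n < e i} => u i)
      (hind.comp _ Subtype.val_injective), Fintype.card_subtype]
  have hdim := Submodule.finrank_add_finrank_le_of_disjoint hWU
  rw [Module.finrank_fintype_fun_eq_card, hN, finrank_signGraphSpan, hU] at hdim
  have hcount := hmono.card_le_add_card_eq_add_card_lt n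
  rw [hr, Nat.card_eq_fintype_card, Fintype.card_subtype]
  omega

/-- Davies–Gladwell–Leydold–Stadler: for a generalized Laplacian `A`
(symmetric, nonpositive off-diagonal, negative exactly on edges) on a finite connected
graph, if `λ_n` (0-indexed: the `(n+1)`-st ordered eigenvalue) has multiplicity `r`,
then any eigenvector for `λ_n` has at most `(n+1) + r - 1 = n + r` strong sign graphs. -/
theorem davies_sign_graph_bound (A : Matrix V V ℝ) (hsymm : A.IsSymm)
    (G : SimpleGraph V)
    (hoff : ∀ x y, x ≠ y → (A x y ≤ 0 ∧ (A x y < 0 ↔ G.Adj x y)))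
    (hconn : G.Connected)
    (N : ℕ) (hN : Fintype.card V = N)
    (e : Fin N → ℝ) (hmono : Monotone e)
    (u : Fin N → (V → ℝ))
    (hu : ∀ i, u i ≠ 0 ∧ A.mulVec (u i) = e i • u i)
    (hind : LinearIndependent ℝ u)
    (n : Fin N) (rmul : ℕ) (hr : rmul = Nat.card {i : Fin N // e i = e n})
    (w : V → ℝ) (hw : w ≠ 0) (hAw : A.mulVec w = e n • w) :
    signGraphCount G w ≤ n.val + rmul :=
  davies_sign_graph_bound_general A hsymm G hoff N hN e hmono u hu hind n rmul hr w hAw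
end
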